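/- Let p : ℝ×B^4 → S^1×B^4 be the universal covering. If a neatly embedded 4-ball D̃ in ℝ×B^4 has boundary 3-sphere lying in the region (a,b)×S^3 between two standard slices {a}×S^3 and {b}×S^3 with b−a < 1, then D̃ can be properly isotoped, fixing its boundary, to lie entirely within [a,b]×B^4, and hence projects to an embedded 4-ball in S^1×B^4 lying in the image of [a,b]×B^4. -/

import Mathlib

open Metric Set

noncomputable section

abbrev Eu (n : ℕ) := EuclideanSpace ℝ (Fin n)

def Sph (n : ℕ) : Set (Eu (n+1)) := sphere 0 1

def Ball (n : ℕ) : Set (Eu n) := closedBall 0 1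

structure SmoothEmbOn {E E' : Type*} [NormedAddCommGroup E] [NormedSpace ℝ E]
    [NormedAddCommGroup E'] [NormedSpace ℝ E'] (f : E → E') (s : Set E) (t : Set E') : Prop where
  smooth : ContDiffOn ℝ (⊤ : ℕ∞) f s
  maps : MapsTo f s t
  emb : Topology.IsEmbedding fun x : s => f x

structure DiffeoOn {E E' : Type*} [NormedAddCommGroup E] [NormedSpace ℝ E]
    [NormedAddCommGroup E'] [NormedSpace ℝ E'] (f : E → E') (g : E' → E)
    (s : Set E) (t : Set E') : Prop where
  smooth_toFun : ContDiffOn ℝ (⊤ : ℕ∞) f s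
  smooth_invFun : ContDiffOn ℝ (⊤ : ℕ∞) g t
  maps_toFun : MapsTo f s t
  maps_invFun : MapsTo g t s
  left_inv : ∀ x ∈ s, g (f x) = x
  right_inv : ∀ y ∈ t, f (g y) = y

def IsDiffeoSet {E E' : Type*} [NormedAddCommGroup E] [NormedSpace ℝ E]
    [NormedAddCommGroup E'] [NormedSpace ℝ E'] (s : Set E) (t : Set E') : Prop :=
  ∃ f g, DiffeoOn f g s t

open Real in
/-- The universal covering `p : ℝ × B⁴ → S¹ × B⁴`, `p(t,x) = (e^{2πit}, x)`. -/
def coveringMap (q : ℝ × Eu 4) : Eu 2 × Eu 4 :=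
  ((WithLp.equiv 2 (Fin 2 → ℝ)).symm ![Real.cos (2 * π * q.1), Real.sin (2 * π * q.1)], q.2)

/-- `ℝ × B⁴`, the universal cover of `S¹ × B⁴`. -/
def RxB4 : Set (ℝ × Eu 4) := univ ×ˢ Ball 4

/-- Its boundary `ℝ × S³`. -/
def bdRxB4 : Set (ℝ × Eu 4) := univ ×ˢ sphere 0 1

/-!
The boundary sphere of `D̃` has its `ℝ`-coordinates in a compact subset of `(a, b)`, while `D̃`
itself has them in some compact set. Integrating a smooth density equal to `1` near the former
and to a tiny constant far away gives a smooth increasing `ψ : ℝ → ℝ` that is the identity on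
the boundary coordinates and squeezes all of `D̃` into `[a, b]`. The straight-line homotopy from
`id` to `ψ` in the `ℝ`-factor consists of injective maps fixing the `B⁴`-coordinate, so it moves
`D̃` through neat embeddings rel boundary, and at time `1` the ball lies in `[a, b] × B⁴`, on
which the covering map is injective because `b - a < 1`.
-/

theorem exists_contDiff_bump_Icc {a b δ : ℝ} (hab : a ≤ b) (hδ : 0 < δ) :
    ∃ f : ℝ → ℝ, ContDiff ℝ (⊤ : ℕ∞) f ∧ (∀ u, f u ∈ Icc 0 1) ∧ EqOn f 1 (Icc a b) ∧
      EqOn f 0 (Ioo (a - δ) (b + δ))ᶜ := by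
  let f : ContDiffBump ((a + b) / 2) :=
    ⟨(b - a) / 2 + δ / 2, (b - a) / 2 + δ, by linarith, by linarith⟩
  have hIn : f.rIn = (b - a) / 2 + δ / 2 := rfl
  have hOut : f.rOut = (b - a) / 2 + δ := rfl
  refine ⟨f, f.contDiff, fun u => ⟨f.nonneg, f.le_one⟩, fun u hu => ?_, fun u hu => ?_⟩
  · refine f.one_of_mem_closedBall ?_
    rw [Real.closedBall_eq_Icc, hIn]
    exact ⟨by linarith [hu.1], by linarith [hu.2]⟩
  · refine f.zero_of_le_dist ?_
    rw [Real.dist_eq, le_abs, hOut]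
    rcases not_and_or.1 hu with hu | hu
    · exact Or.inr (by linarith [not_lt.1 hu])
    · exact Or.inl (by linarith [not_lt.1 hu])

theorem ContDiff.intervalIntegral_right {ρ : ℝ → ℝ} (hρ : ContDiff ℝ (⊤ : ℕ∞) ρ) (c : ℝ) :
    ContDiff ℝ (⊤ : ℕ∞) fun s => ∫ u in c..s, ρ u := by
  refine contDiff_infty_iff_deriv.2 ⟨fun s => ?_, ?_⟩
  · exact (hρ.continuous.integral_hasStrictDerivAt c s).hasDerivAt.differentiableAt
  · rw [funext (hρ.continuous.deriv_integral ρ c)]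
    exact hρ

theorem exists_contDiff_mem_Ioc_eqOn_one_Icc {a b δ ε : ℝ} (hab : a ≤ b) (hδ : 0 < δ)
    (hε : ε ∈ Ioc 0 1) :
    ∃ ρ : ℝ → ℝ, ContDiff ℝ (⊤ : ℕ∞) ρ ∧ (∀ u, ρ u ∈ Ioc 0 1) ∧ EqOn ρ 1 (Icc a b) ∧
      EqOn ρ (fun _ => ε) (Ioo (a - δ) (b + δ))ᶜ := by
  obtain ⟨f, hf, hf01, hf1, hf0⟩ := exists_contDiff_bump_Icc hab hδ
  refine ⟨fun u => ε + (1 - ε) * f u, contDiff_const.add (contDiff_const.mul hf),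
    fun u => ⟨?_, ?_⟩, fun u hu => ?_, fun u hu => ?_⟩
  · exact add_pos_of_pos_of_nonneg hε.1 (mul_nonneg (sub_nonneg.2 hε.2) (hf01 u).1)
  · nlinarith [(hf01 u).2, hε.2]
  · simp [hf1 hu]
  · simp [hf0 hu]

theorem exists_contDiff_strictMono_eqOn_Icc_mapsTo_Icc {a a' b' b : ℝ} (ha : a < a')
    (hab : a' ≤ b') (hb : b' < b) (m M : ℝ) :
    ∃ ψ : ℝ → ℝ, ContDiff ℝ (⊤ : ℕ∞) ψ ∧ StrictMono ψ ∧ EqOn ψ id (Icc a' b') ∧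
      MapsTo ψ (Icc m M) (Icc a b) := by
  set δ := min (a' - a) (b - b') / 2 with hδ_def
  have hδ : 0 < δ := half_pos (lt_min (by linarith) (by linarith))
  have hδa : a ≤ a' - 2 * δ := by linarith [min_le_left (a' - a) (b - b'), hδ_def]
  have hδb : b' + 2 * δ ≤ b := by linarith [min_le_right (a' - a) (b - b'), hδ_def]
  set m₀ := min m (a' - δ)
  set M₀ := max M (b' + δ)
  have hm₀ : m₀ ≤ a' - δ := min_le_right _ _
  have hM₀ : b' + δ ≤ M₀ := le_max_right _ _
  -- slope off `(a' - δ, b' + δ)`, chosen so that the tails over `[m₀, M₀]` gain at most `δ`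
  set ε := δ / (M₀ - m₀)
  have hεδ : ε * (M₀ - m₀) = δ := div_mul_cancel₀ _ (by linarith)
  have hε : ε ∈ Ioc 0 1 := ⟨div_pos hδ (by linarith), (div_le_one (by linarith)).2 (by linarith)⟩
  obtain ⟨ρ, hρ, hρ01, hρ1, hρε⟩ := exists_contDiff_mem_Ioc_eqOn_one_Icc hab hδ hε
  set ψ : ℝ → ℝ := fun s => a' + ∫ u in a'..s, ρ u
  have hψρ : ∀ s, HasDerivAt ψ (ρ s) s := fun s =>
    (hρ.continuous.integral_hasStrictDerivAt a' s).hasDerivAt.const_add a'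
  have hderiv : deriv ψ = ρ := funext fun s => (hψρ s).deriv
  have hdiff : Differentiable ℝ ψ := fun s => (hψρ s).differentiableAt
  have hmono : StrictMono ψ := strictMono_of_deriv_pos fun s => hderiv ▸ (hρ01 s).1
  have hid : EqOn ψ id (Icc a' b') := fun s hs => by
    have : EqOn ρ 1 (uIcc a' s) :=
      hρ1.mono (by rw [uIcc_of_le hs.1]; exact Icc_subset_Icc_right hs.2)
    simp [ψ, intervalIntegral.integral_congr this]
  have hslow : ∀ x y, x ≤ y → ψ y - ψ x ≤ y - x := fun x y hxy => by
    have := image_sub_le_mul_sub_of_deriv_le hdiff (fun s => hderiv ▸ (hρ01 s).2) hxy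
    rwa [one_mul] at this
  have htail : ∀ D : Set ℝ, Convex ℝ D → D ⊆ (Ioo (a' - δ) (b' + δ))ᶜ →
      ∀ x ∈ D, ∀ y ∈ D, x ≤ y → ψ y - ψ x ≤ ε * (y - x) := fun D hD hDε =>
    hD.image_sub_le_mul_sub_of_deriv_le hdiff.continuous.continuousOn hdiff.differentiableOn
      fun s hs => (congrFun hderiv s ▸ hρε (hDε (interior_subset hs))).le
  have hleft := htail (Iic (a' - δ)) (convex_Iic _) (fun s hs h => (not_lt.2 hs) h.1)
    m₀ hm₀ (a' - δ) self_mem_Iic hm₀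
  have hright := htail (Ici (b' + δ)) (convex_Ici _) (fun s hs h => (not_lt.2 hs) h.2)
    (b' + δ) self_mem_Ici M₀ hM₀ hM₀
  have hψa' : ψ a' = a' := hid ⟨le_rfl, hab⟩
  have hψb' : ψ b' = b' := hid ⟨hab, le_rfl⟩
  have hεm : ε * (a' - δ - m₀) ≤ δ := hεδ ▸ mul_le_mul_of_nonneg_left (by linarith) hε.1.le
  have hεM : ε * (M₀ - (b' + δ)) ≤ δ := hεδ ▸ mul_le_mul_of_nonneg_left (by linarith) hε.1.le
  refine ⟨ψ, contDiff_const.add (hρ.intervalIntegral_right a'), hmono, hid, fun s hs => ⟨?_, ?_⟩⟩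
  · have := hmono.monotone (show m₀ ≤ s from (min_le_left _ _).trans hs.1)
    linarith [hslow (a' - δ) a' (by linarith)]
  · have := hmono.monotone (show s ≤ M₀ from hs.2.trans (le_max_left _ _))
    linarith [hslow b' (b' + δ) (by linarith)]

theorem exists_contDiff_strictMono_eqOn_mapsTo_Icc {a b : ℝ} {K L : Set ℝ} (hK : IsCompact K)
    (hKne : K.Nonempty) (hKab : K ⊆ Ioo a b) (hL : IsCompact L) :
    ∃ ψ : ℝ → ℝ, ContDiff ℝ (⊤ : ℕ∞) ψ ∧ StrictMono ψ ∧ EqOn ψ id K ∧ MapsTo ψ L (Icc a b) := by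
  obtain ⟨m, hm⟩ := hL.bddBelow
  obtain ⟨M, hM⟩ := hL.bddAbove
  obtain ⟨ψ, hψ, hmono, hid, hmaps⟩ := exists_contDiff_strictMono_eqOn_Icc_mapsTo_Icc
    (hKab (hK.sInf_mem hKne)).1 (csInf_le_csSup hKne hK.bddBelow hK.bddAbove)
    (hKab (hK.sSup_mem hKne)).2 m M
  refine ⟨ψ, hψ, hmono, hid.mono fun s hs => ?_, hmaps.mono_left fun s hs => ⟨hm hs, hM hs⟩⟩
  exact ⟨csInf_le hK.bddBelow hs, le_csSup hK.bddAbove hs⟩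

section PushFst

variable {F : Type*}

def pushFst (ψ : ℝ → ℝ) (t : ℝ) (q : ℝ × F) : ℝ × F := ((1 - t) * q.1 + t * ψ q.1, q.2)

variable {ψ : ℝ → ℝ} {t : ℝ}

theorem pushFst_zero (q : ℝ × F) : pushFst ψ 0 q = q := by
  simp [pushFst]

theorem pushFst_one_fst (q : ℝ × F) : (pushFst ψ 1 q).1 = ψ q.1 := by
  simp [pushFst]

theorem pushFst_of_apply_fst_eq {q : ℝ × F} (hq : ψ q.1 = q.1) : pushFst ψ t q = q := by
  simp only [pushFst, hq]
  ext <;> simp only; ring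

theorem continuous_pushFst [TopologicalSpace F] (hψ : Continuous ψ) :
    Continuous fun p : ℝ × (ℝ × F) => pushFst ψ p.1 p.2 := by
  unfold pushFst; fun_prop

theorem contDiff_pushFst [NormedAddCommGroup F] [NormedSpace ℝ F]
    (hψ : ContDiff ℝ (⊤ : ℕ∞) ψ) (t : ℝ) : ContDiff ℝ (⊤ : ℕ∞) (pushFst (F := F) ψ t) :=
  ((contDiff_const.mul contDiff_fst).add (contDiff_const.mul (hψ.comp contDiff_fst))).prodMk
    contDiff_snd

theorem injective_pushFst (hψ : StrictMono ψ) (ht : t ∈ Icc (0 : ℝ) 1) :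
    Function.Injective (pushFst (F := F) ψ t) := by
  have hline : StrictMono fun s => (1 - t) * s + t * ψ s := by
    rcases ht.1.eq_or_lt with rfl | ht0
    · simp only [sub_zero, one_mul, zero_mul, add_zero]
      exact fun _ _ h => h
    · exact (monotone_id.const_mul (sub_nonneg.2 ht.2)).add_strictMono (hψ.const_mul ht0)
  intro q q' h
  simp only [pushFst, Prod.mk.injEq] at h
  exact Prod.ext (hline.injective h.1) h.2

end PushFst

theorem smoothEmbOn_of_isCompact {E E' : Type*} [NormedAddCommGroup E] [NormedSpace ℝ E]
    [NormedAddCommGroup E'] [NormedSpace ℝ E'] {f : E → E'} {s : Set E} {t : Set E'}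
    (hs : IsCompact s) (hf : ContDiffOn ℝ (⊤ : ℕ∞) f s) (hst : MapsTo f s t) (hinj : InjOn f s) :
    SmoothEmbOn f s t := by
  have : CompactSpace s := isCompact_iff_compactSpace.mp hs
  exact ⟨hf, hst, ((continuousOn_iff_continuous_domRestrict.mp hf.continuousOn).isClosedEmbedding
    hinj.injective).isEmbedding⟩

theorem SmoothEmbOn.injOn {E E' : Type*} [NormedAddCommGroup E] [NormedSpace ℝ E]
    [NormedAddCommGroup E'] [NormedSpace ℝ E'] {f : E → E'} {s : Set E} {t : Set E'}
    (hf : SmoothEmbOn f s t) : InjOn f s := fun x hx y hy h =>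
  congrArg Subtype.val (hf.emb.injective (a₁ := ⟨x, hx⟩) (a₂ := ⟨y, hy⟩) h)

theorem mem_RxB4 {q : ℝ × Eu 4} : q ∈ RxB4 ↔ q.2 ∈ Ball 4 := by
  simp [RxB4]

theorem mem_bdRxB4 {q : ℝ × Eu 4} : q ∈ bdRxB4 ↔ q.2 ∈ sphere 0 1 := by
  simp [bdRxB4]

theorem contDiff_coveringMap : ContDiff ℝ (⊤ : ℕ∞) coveringMap := by
  refine ContDiff.prodMk ?_ contDiff_snd
  refine (EuclideanSpace.equiv (Fin 2) ℝ).symm.contDiff.comp (contDiff_pi.2 fun i => ?_)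
  fin_cases i
  · exact Real.contDiff_cos.comp (contDiff_const.mul contDiff_fst)
  · exact Real.contDiff_sin.comp (contDiff_const.mul contDiff_fst)

theorem coveringMap_fst_mem_sph (q : ℝ × Eu 4) : (coveringMap q).1 ∈ Sph 1 := by
  simp [coveringMap, Sph, EuclideanSpace.norm_eq, Fin.sum_univ_two]

open Real in
theorem injOn_coveringMap {a b : ℝ} (hab : b - a < 1) :
    InjOn coveringMap (Icc a b ×ˢ univ) := by
  rintro ⟨s, v⟩ ⟨hs, -⟩ ⟨s', v'⟩ ⟨hs', -⟩ h
  simp only [coveringMap, Prod.mk.injEq] at h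
  obtain ⟨hcs, rfl⟩ := h
  have hvec := (WithLp.equiv 2 (Fin 2 → ℝ)).symm.injective hcs
  have hcos : cos (2 * π * s) = cos (2 * π * s') := congrFun hvec 0
  have hsin : sin (2 * π * s) = sin (2 * π * s') := congrFun hvec 1
  have hcos_sub : cos (2 * π * s - 2 * π * s') = 1 := by
    rw [cos_sub, hcos, hsin, ← sq, ← sq, cos_sq_add_sin_sq]
  have hs's : |s - s'| < 1 :=
    abs_sub_lt_iff.2 ⟨by linarith [hs.2, hs'.1], by linarith [hs.1, hs'.2]⟩
  have hπ := pi_pos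
  rw [cos_eq_one_iff_of_lt_of_lt (by nlinarith [neg_abs_le (s - s')])
    (by nlinarith [le_abs_self (s - s')])] at hcos_sub
  obtain rfl : s = s' := by nlinarith
  rfl

theorem ball_in_universal_cover_pushed_between_slices_general
    (a b : ℝ) (hlen : b - a < 1)
    (d : Eu 4 → ℝ × Eu 4)
    (hd : SmoothEmbOn d (Ball 4) RxB4)
    (hneat : ∀ x ∈ Ball 4, (d x ∈ bdRxB4 ↔ x ∈ sphere (0 : Eu 4) 1))
    (hbd : d '' sphere 0 1 ⊆ (Ioo a b) ×ˢ sphere 0 1) :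
    ∃ F : ℝ → Eu 4 → ℝ × Eu 4,
      ContinuousOn (fun p : ℝ × Eu 4 => F p.1 p.2) (Icc 0 1 ×ˢ Ball 4) ∧
      (∀ t ∈ Icc (0:ℝ) 1, SmoothEmbOn (F t) (Ball 4) RxB4 ∧
        ∀ x ∈ Ball 4, (F t x ∈ bdRxB4 ↔ x ∈ sphere (0 : Eu 4) 1)) ∧
      (∀ x ∈ Ball 4, F 0 x = d x) ∧
      (∀ t ∈ Icc (0:ℝ) 1, ∀ x ∈ sphere (0 : Eu 4) 1, F t x = d x) ∧
      F 1 '' Ball 4 ⊆ (Icc a b) ×ˢ Ball 4 ∧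
      SmoothEmbOn (coveringMap ∘ F 1) (Ball 4)
        ((Sph 1 : Set (Eu 2)) ×ˢ Ball 4) ∧
      (coveringMap ∘ F 1) '' Ball 4 ⊆ coveringMap '' ((Icc a b) ×ˢ Ball 4) := by
  have hBall : IsCompact (Ball 4) := isCompact_closedBall 0 1
  have hsphere : sphere (0 : Eu 4) 1 ⊆ Ball 4 := sphere_subset_closedBall
  have hd₁ : ContinuousOn (fun x => (d x).1) (Ball 4) :=
    continuous_fst.comp_continuousOn hd.smooth.continuousOn
  obtain ⟨ψ, hψ, hψmono, hψK, hψL⟩ := exists_contDiff_strictMono_eqOn_mapsTo_Icc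
    ((isCompact_sphere 0 1).image_of_continuousOn (hd₁.mono hsphere))
    ((NormedSpace.sphere_nonempty.2 zero_le_one).image _)
    (image_subset_iff.2 fun x hx => (hbd (mem_image_of_mem d hx)).1)
    (hBall.image_of_continuousOn hd₁)
  have hF1 : MapsTo (pushFst ψ 1 ∘ d) (Ball 4) (Icc a b ×ˢ Ball 4) := fun x hx =>
    ⟨(pushFst_one_fst (d x)).symm ▸ hψL (mem_image_of_mem _ hx), mem_RxB4.1 (hd.maps hx)⟩
  have hFemb : ∀ t ∈ Icc (0 : ℝ) 1, SmoothEmbOn (pushFst ψ t ∘ d) (Ball 4) RxB4 := fun t ht =>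
    smoothEmbOn_of_isCompact hBall ((contDiff_pushFst hψ t).comp_contDiffOn hd.smooth)
      (fun x hx => mem_RxB4.2 (mem_RxB4.1 (hd.maps hx)))
      ((injective_pushFst hψmono ht).comp_injOn hd.injOn)
  refine ⟨fun t => pushFst ψ t ∘ d, ?_, fun t ht => ⟨hFemb t ht, fun x hx => ?_⟩,
    fun x _ => pushFst_zero (d x),
    fun t _ x hx => pushFst_of_apply_fst_eq (hψK (mem_image_of_mem _ hx)), hF1.image_subset,
    smoothEmbOn_of_isCompact hBall
      (contDiff_coveringMap.comp_contDiffOn ((contDiff_pushFst hψ 1).comp_contDiffOn hd.smooth))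
      (fun x hx => ⟨coveringMap_fst_mem_sph _, (hF1 hx).2⟩)
      ((injOn_coveringMap hlen).comp (hFemb 1 ⟨zero_le_one, le_rfl⟩).injOn
        fun x hx => ⟨(hF1 hx).1, mem_univ _⟩),
    by rw [image_comp]; exact image_mono hF1.image_subset⟩
  · exact (continuous_pushFst hψ.continuous).comp_continuousOn
      (continuous_fst.continuousOn.prodMk (hd.smooth.continuousOn.comp continuous_snd.continuousOn
        fun p hp => hp.2))
  · rw [← hneat x hx, mem_bdRxB4, mem_bdRxB4]
    rfl

/-- if a neatly embedded 4-ball `D̃` in `ℝ × B⁴` has boundary 3-sphere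
lying in `(a,b) × S³` with `b - a < 1`, then `D̃` can be properly isotoped rel boundary
into `[a,b] × B⁴`, and hence projects to an embedded 4-ball in `S¹ × B⁴` lying in the
image of `[a,b] × B⁴`. -/
theorem ball_in_universal_cover_pushed_between_slices
    (a b : ℝ) (hab : a < b) (hlen : b - a < 1)
    (d : Eu 4 → ℝ × Eu 4)
    (hd : SmoothEmbOn d (Ball 4) RxB4)
    (hneat : ∀ x ∈ Ball 4, (d x ∈ bdRxB4 ↔ x ∈ sphere (0 : Eu 4) 1))
    (hbd : d '' sphere 0 1 ⊆ (Ioo a b) ×ˢ sphere 0 1) :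
    ∃ F : ℝ → Eu 4 → ℝ × Eu 4,
      ContinuousOn (fun p : ℝ × Eu 4 => F p.1 p.2) (Icc 0 1 ×ˢ Ball 4) ∧
      (∀ t ∈ Icc (0:ℝ) 1, SmoothEmbOn (F t) (Ball 4) RxB4 ∧
        ∀ x ∈ Ball 4, (F t x ∈ bdRxB4 ↔ x ∈ sphere (0 : Eu 4) 1)) ∧
      (∀ x ∈ Ball 4, F 0 x = d x) ∧
      (∀ t ∈ Icc (0:ℝ) 1, ∀ x ∈ sphere (0 : Eu 4) 1, F t x = d x) ∧
      F 1 '' Ball 4 ⊆ (Icc a b) ×ˢ Ball 4 ∧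
      SmoothEmbOn (coveringMap ∘ F 1) (Ball 4)
        ((Sph 1 : Set (Eu 2)) ×ˢ Ball 4) ∧
      (coveringMap ∘ F 1) '' Ball 4 ⊆ coveringMap '' ((Icc a b) ×ˢ Ball 4) :=
  ball_in_universal_cover_pushed_between_slices_general a b hlen d hd hneat hbd
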